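/- Let K be a compact Hausdorff space and H ⊆ C(K, K_C) such that Conv(H) separates the points of K. Given x_0 ∈ K and an open neighborhood V of x_0, there exists an open neighborhood U of x_0 with U ⊆ V such that for all 0 < δ < 1/2 there is φ ∈ Conv(H) with φ(t) > 1 − δ for all t ∈ U and φ(t) < δ for all t ∉ V. -/

import Mathlib

/-- The space `K_C` of nonempty compact intervals of `ℝ`, given by endpoints. -/
structure KC where
  lo : ℝ
  hi : ℝ
  isLe : lo ≤ hi

namespace KC

@[ext] theorem ext' {A B : KC} (h1 : A.lo = B.lo) (h2 : A.hi = B.hi) : A = B := by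
  cases A; cases B; simp_all

/-- Minkowski addition. -/
instance : Add KC := ⟨fun A B => ⟨A.lo + B.lo, A.hi + B.hi, add_le_add A.isLe B.isLe⟩⟩

instance : Zero KC := ⟨⟨0, 0, le_refl 0⟩⟩

/-- Scalar multiplication `λ·[a,b] = {λx : x ∈ [a,b]}`. -/
noncomputable instance : SMul ℝ KC :=
  ⟨fun c A => ⟨min (c * A.lo) (c * A.hi), max (c * A.lo) (c * A.hi), min_le_max⟩⟩

noncomputable instance : AddCommMonoid KC where
  add_assoc A B C := by ext <;> exact add_assoc _ _ _
  zero_add A := by ext <;> exact zero_add _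
  add_zero A := by ext <;> exact add_zero _
  add_comm A B := by ext <;> exact add_comm _ _
  nsmul := nsmulRec

/-- The Hausdorff metric on `K_C`: `d_H([a,b],[c,d]) = max {|a-c|, |b-d|}`. -/
noncomputable instance : MetricSpace KC where
  dist A B := max |A.lo - B.lo| |A.hi - B.hi|
  dist_self A := by simp
  dist_comm A B := by simp [abs_sub_comm]
  dist_triangle A B C := by
    apply max_le
    · calc |A.lo - C.lo| ≤ |A.lo - B.lo| + |B.lo - C.lo| := abs_sub_le _ _ _
        _ ≤ _ := add_le_add (le_max_left _ _) (le_max_left _ _)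
    · calc |A.hi - C.hi| ≤ |A.hi - B.hi| + |B.hi - C.hi| := abs_sub_le _ _ _
        _ ≤ _ := add_le_add (le_max_right _ _) (le_max_right _ _)
  eq_of_dist_eq_zero := by
    intro A B h
    have h1 : |A.lo - B.lo| = 0 :=
      le_antisymm (le_of_le_of_eq (le_max_left _ _) h) (abs_nonneg _)
    have h2 : |A.hi - B.hi| = 0 :=
      le_antisymm (le_of_le_of_eq (le_max_right _ _) h) (abs_nonneg _)
    ext
    · linarith [abs_eq_zero.mp h1]
    · linarith [abs_eq_zero.mp h2]

/-- The generalized Hukuhara difference. -/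
noncomputable def gH (A B : KC) : KC :=
  ⟨min (A.lo - B.lo) (A.hi - B.hi), max (A.lo - B.lo) (A.hi - B.hi), min_le_max⟩

/-- The length (diameter) of an interval. -/
def len (A : KC) : ℝ := A.hi - A.lo

end KC

/-- `Conv H`: continuous `[0,1]`-valued functions `φ` with `φf + (1-φ)g ∈ H` for all `f,g ∈ H`. -/
def Conv {K : Type*} [TopologicalSpace K] (H : Set C(K, KC)) : Set C(K, ℝ) :=
  {φ | (∀ k, φ k ∈ Set.Icc (0:ℝ) 1) ∧
    ∀ f ∈ H, ∀ g ∈ H, ∃ h ∈ H, ∀ k, h k = φ k • f k + (1 - φ k) • g k}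

/-!
`Conv H` contains `1`, is closed under `φ ↦ 1 - φ` and under products, hence contains
`1 - (1 - φ ^ n) ^ m`; for suitable `n, m` this pushes the values of `φ` below a threshold `a`
to almost `0` and those above `b > a` to almost `1`. Separation then gives, for each `t ∉ V`,
some `ψ ∈ Conv H` with `ψ x₀ < 1/4 < 3/4 < ψ t`. Cover the compact set `Vᶜ` by finitely many
sets `{ψᵢ > 3/4}` and put `U = V ∩ ⋂ᵢ {ψᵢ < 1/4}`. Sharpening each `ψᵢ` to `χᵢ`, the product
of the `1 - χᵢ` is close to `1` on `U` and close to `0` off `V`.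
-/

open Set Filter Topology

lemma exists_nat_mul_pow_lt_and_inv_lt {a b ε : ℝ} (ha : 0 ≤ a) (hab : a < b) (hb : b ≤ 1)
    (hε : 0 < ε) : ∃ n m : ℕ, m * a ^ n < ε ∧ ε⁻¹ < m * b ^ n := by
  obtain ⟨θ, haθ, hθb⟩ := exists_between hab
  have hθ : 0 < θ := ha.trans_lt haθ
  have hsmall : Tendsto (fun n : ℕ => (a / θ) ^ n + a ^ n) atTop (𝓝 0) := by
    simpa using (tendsto_pow_atTop_nhds_zero_of_lt_one (div_nonneg ha hθ.le)
      ((div_lt_one hθ).2 haθ)).add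
      (tendsto_pow_atTop_nhds_zero_of_lt_one ha (hab.trans_le hb))
  have hlarge : Tendsto (fun n : ℕ => (b / θ) ^ n) atTop atTop :=
    tendsto_pow_atTop_atTop_of_one_lt ((one_lt_div hθ).2 hθb)
  obtain ⟨n, hn_small, hn_large⟩ :=
    ((hsmall.eventually (gt_mem_nhds hε)).and (hlarge.eventually_gt_atTop ε⁻¹)).exists
  -- `m = ⌈θ⁻ⁿ⌉` sits between the two geometric rates `aⁿ` and `bⁿ`
  refine ⟨n, ⌈(θ⁻¹ ^ n : ℝ)⌉₊, ?_, ?_⟩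
  · calc (⌈(θ⁻¹ ^ n : ℝ)⌉₊ : ℝ) * a ^ n ≤ (θ⁻¹ ^ n + 1) * a ^ n := by
          gcongr; exact (Nat.ceil_lt_add_one (by positivity)).le
      _ = (a / θ) ^ n + a ^ n := by rw [div_eq_mul_inv, mul_pow]; ring
      _ < ε := hn_small
  · calc ε⁻¹ < (b / θ) ^ n := hn_large
      _ = θ⁻¹ ^ n * b ^ n := by rw [div_eq_mul_inv, mul_pow]; ring
      _ ≤ (⌈(θ⁻¹ ^ n : ℝ)⌉₊ : ℝ) * b ^ n := by
          gcongr; exacts [pow_nonneg (ha.trans hab.le) n, Nat.le_ceil _]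

lemma one_sub_pow_mul_one_add_mul_le_one {y : ℝ} (hy₀ : 0 ≤ y) (hy₁ : y ≤ 1) (m : ℕ) :
    (1 - y) ^ m * (1 + m * y) ≤ 1 :=
  calc (1 - y) ^ m * (1 + m * y) ≤ (1 - y) ^ m * (1 + y) ^ m := by
        gcongr; exact one_add_mul_le_pow (by linarith) m
    _ = (1 - y ^ 2) ^ m := by rw [← mul_pow]; ring
    _ ≤ 1 := pow_le_one₀ (by nlinarith) (by nlinarith)

lemma exists_one_sub_pow_pow_bounds {a b ε : ℝ} (ha : 0 ≤ a) (hab : a < b)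
    (hb : b ≤ 1) (hε : 0 < ε) :
    ∃ n m : ℕ, (∀ x ∈ Icc 0 a, 1 - (1 - x ^ n) ^ m < ε) ∧ ∀ x ∈ Icc b 1, (1 - x ^ n) ^ m < ε := by
  obtain ⟨n, m, hm_small, hm_large⟩ := exists_nat_mul_pow_lt_and_inv_lt ha hab hb hε
  refine ⟨n, m, fun x ⟨hx₀, hxa⟩ => ?_, fun x ⟨hbx, hx₁⟩ => ?_⟩
  · have hbernoulli : 1 - m * x ^ n ≤ (1 - x ^ n) ^ m := by
      have := one_add_mul_sub_le_pow (a := 1 - x ^ n)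
        (by linarith [pow_le_one₀ hx₀ (hxa.trans (hab.le.trans hb)) (n := n)]) m
      linarith
    have : (m : ℝ) * x ^ n ≤ m * a ^ n := by gcongr
    linarith
  · have hbn₀ : 0 ≤ b ^ n := pow_nonneg (ha.trans hab.le) n
    have hbn₁ : b ^ n ≤ 1 := pow_le_one₀ (by linarith) hb
    have hprod := one_sub_pow_mul_one_add_mul_le_one hbn₀ hbn₁ m
    have hlarge : 1 < ε * (1 + m * b ^ n) := by
      rw [inv_lt_iff_one_lt_mul₀ hε] at hm_large; nlinarith
    calc (1 - x ^ n) ^ m ≤ (1 - b ^ n) ^ m := by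
          gcongr
          · linarith [pow_le_one₀ (by linarith) hx₁ (n := n)]
          · linarith
      _ < ε := by nlinarith [pow_nonneg (sub_nonneg.2 hbn₁) m]

namespace KC

@[simp] lemma add_lo (A B : KC) : (A + B).lo = A.lo + B.lo := rfl

@[simp] lemma add_hi (A B : KC) : (A + B).hi = A.hi + B.hi := rfl

@[simp] lemma smul_lo {c : ℝ} (hc : 0 ≤ c) (A : KC) : (c • A).lo = c * A.lo :=
  min_eq_left (mul_le_mul_of_nonneg_left A.isLe hc)

@[simp] lemma smul_hi {c : ℝ} (hc : 0 ≤ c) (A : KC) : (c • A).hi = c * A.hi :=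
  max_eq_right (mul_le_mul_of_nonneg_left A.isLe hc)

lemma one_smul_add_zero_smul (A B : KC) : (1 : ℝ) • A + (1 - 1 : ℝ) • B = A := by
  ext <;> simp

lemma smul_add_one_sub_smul_assoc {c d : ℝ} (hc₀ : 0 ≤ c) (hc₁ : c ≤ 1) (hd₀ : 0 ≤ d)
    (hd₁ : d ≤ 1) (A B : KC) :
    c • (d • A + (1 - d) • B) + (1 - c) • B = (c * d) • A + (1 - c * d) • B := by
  have hcd : c * d ≤ 1 := mul_le_one₀ hc₁ hd₀ hd₁
  ext <;> simp [*, mul_nonneg, sub_nonneg.2] <;> ring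

end KC

namespace Conv

variable {K : Type*} [TopologicalSpace K] {H : Set C(K, KC)} {φ ψ : C(K, ℝ)}

lemma apply_nonneg (hφ : φ ∈ Conv H) (k : K) : 0 ≤ φ k := (hφ.1 k).1

lemma apply_le_one (hφ : φ ∈ Conv H) (k : K) : φ k ≤ 1 := (hφ.1 k).2

lemma one_mem : (1 : C(K, ℝ)) ∈ Conv H :=
  ⟨fun _ => by simp, fun f hf _ _ => ⟨f, hf, fun k => (KC.one_smul_add_zero_smul _ _).symm⟩⟩

lemma one_sub_mem (hφ : φ ∈ Conv H) : 1 - φ ∈ Conv H := by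
  refine ⟨fun k => ?_, fun f hf g hg => ?_⟩
  · simp [apply_nonneg hφ k, apply_le_one hφ k]
  · obtain ⟨h, hh, hφh⟩ := hφ.2 g hg f hf
    exact ⟨h, hh, fun k => by simp [hφh k, add_comm]⟩

lemma mul_mem (hφ : φ ∈ Conv H) (hψ : ψ ∈ Conv H) : φ * ψ ∈ Conv H := by
  refine ⟨fun k => ?_, fun f hf g hg => ?_⟩
  · exact ⟨mul_nonneg (apply_nonneg hφ k) (apply_nonneg hψ k),
      mul_le_one₀ (apply_le_one hφ k) (apply_nonneg hψ k) (apply_le_one hψ k)⟩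
  · obtain ⟨h₁, hh₁, hψh₁⟩ := hψ.2 f hf g hg
    obtain ⟨h, hh, hφh⟩ := hφ.2 h₁ hh₁ g hg
    refine ⟨h, hh, fun k => ?_⟩
    rw [hφh, hψh₁, KC.smul_add_one_sub_smul_assoc (apply_nonneg hφ k) (apply_le_one hφ k)
      (apply_nonneg hψ k) (apply_le_one hψ k)]
    rfl

variable (H) in
def submonoid : Submonoid C(K, ℝ) where
  carrier := Conv H
  one_mem' := one_mem
  mul_mem' := mul_mem

lemma exists_amplify (hφ : φ ∈ Conv H) {a b ε : ℝ} (ha : 0 ≤ a) (hab : a < b) (hb : b ≤ 1)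
    (hε : 0 < ε) :
    ∃ ψ ∈ Conv H, (∀ x, φ x ≤ a → ψ x < ε) ∧ ∀ x, b ≤ φ x → 1 - ε < ψ x := by
  obtain ⟨n, m, hlow, hhigh⟩ := exists_one_sub_pow_pow_bounds ha hab hb hε
  refine ⟨1 - (1 - φ ^ n) ^ m,
    one_sub_mem <| (submonoid H).pow_mem (one_sub_mem <| (submonoid H).pow_mem hφ n) m,
    fun x hx => ?_, fun x hx => ?_⟩
  · simpa using hlow (φ x) ⟨apply_nonneg hφ x, hx⟩
  · simpa using hhigh (φ x) ⟨hx, apply_le_one hφ x⟩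

lemma exists_lt_and_one_sub_lt_of_ne {s t : K} (hφ : φ ∈ Conv H) (hst : φ s ≠ φ t) {ε : ℝ}
    (hε : 0 < ε) : ∃ ψ ∈ Conv H, ψ s < ε ∧ 1 - ε < ψ t := by
  wlog hlt : φ s < φ t generalizing φ
  · exact this (one_sub_mem hφ) (by simpa using hst)
      (by simpa using (lt_of_le_of_ne (not_lt.1 hlt) hst.symm))
  obtain ⟨ψ, hψ, hs, ht⟩ :=
    exists_amplify hφ (apply_nonneg hφ s) hlt (apply_le_one hφ t) hε
  exact ⟨ψ, hψ, hs s le_rfl, ht t le_rfl⟩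

lemma exists_prod_amplify {ι : Type*} (s : Finset ι) {ψ : ι → C(K, ℝ)}
    (hψ : ∀ i, ψ i ∈ Conv H) {a b δ : ℝ} (ha : 0 ≤ a) (hab : a < b) (hb : b ≤ 1)
    (hδ : 0 < δ) :
    ∃ φ ∈ Conv H, (∀ t, (∀ i ∈ s, ψ i t ≤ a) → 1 - δ < φ t) ∧
      ∀ t, (∃ i ∈ s, b ≤ ψ i t) → φ t < δ := by
  -- capping at `1` keeps the factors `1 - χᵢ` bounded below by `1 - ε ≥ 0`
  set δ₁ := min δ 1
  set ε := δ₁ / (s.card + 1)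
  have hδ₁ : 0 < δ₁ := lt_min hδ one_pos
  have hε : 0 < ε := by positivity
  have hε_le : ε ≤ δ₁ := div_le_self hδ₁.le (by simp)
  have hcard_ε : s.card * ε < δ₁ := by
    rw [mul_div_assoc', div_lt_iff₀ (by positivity)]; nlinarith
  have hδ₁_le : δ₁ ≤ δ := min_le_left δ 1
  have hδ₁_le_one : δ₁ ≤ 1 := min_le_right δ 1
  choose χ hχ hχ_low hχ_high using fun i => exists_amplify (hψ i) ha hab hb hε
  have hg : ∀ i, 1 - χ i ∈ Conv H := fun i => one_sub_mem (hχ i)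
  refine ⟨∏ i ∈ s, (1 - χ i), (submonoid H).prod_mem fun i _ => hg i,
    fun t ht => ?_, fun t ⟨i, hi, hit⟩ => ?_⟩
  · rw [ContinuousMap.prod_apply]
    have hfactor : ∀ i ∈ s, 1 - ε ≤ (1 - χ i) t := fun i hi => by
      simp only [ContinuousMap.sub_apply, ContinuousMap.one_apply]
      linarith [hχ_low i t (ht i hi)]
    calc 1 - δ < 1 - s.card * ε := by linarith
      _ ≤ (1 - ε) ^ s.card := by
          simpa [sub_eq_add_neg] using one_add_mul_le_pow (by linarith : (-2 : ℝ) ≤ -ε) s.card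
      _ = ∏ _i ∈ s, (1 - ε) := (Finset.prod_const _).symm
      _ ≤ ∏ i ∈ s, (1 - χ i) t :=
          Finset.prod_le_prod (fun _ _ => by linarith) hfactor
  · rw [ContinuousMap.prod_apply]
    calc ∏ j ∈ s, (1 - χ j) t ≤ ∏ j ∈ {i}, (1 - χ j) t :=
          Finset.prod_le_prod_of_subset_of_le_one (by simpa using hi)
            (fun j _ => apply_nonneg (hg j) t) (fun j _ _ => apply_le_one (hg j) t)
      _ < ε := by simp only [Finset.prod_singleton, ContinuousMap.sub_apply,
            ContinuousMap.one_apply]; linarith [hχ_high i t hit]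
      _ ≤ δ := hε_le.trans hδ₁_le

end Conv

theorem conv_selection_lemma_general {K : Type*} [TopologicalSpace K] [CompactSpace K]
    (H : Set C(K, KC))
    (hsep : ∀ s t : K, s ≠ t → ∃ φ ∈ Conv H, φ s ≠ φ t)
    (x₀ : K) (V : Set K) (hV : IsOpen V) (hx₀ : x₀ ∈ V) :
    ∃ U : Set K, IsOpen U ∧ x₀ ∈ U ∧ U ⊆ V ∧
      ∀ δ : ℝ, 0 < δ → δ < 1/2 →
        ∃ φ ∈ Conv H, (∀ t ∈ U, 1 - δ < φ t) ∧ (∀ t ∉ V, φ t < δ) := by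
  let ι := {ψ : C(K, ℝ) // ψ ∈ Conv H ∧ ψ x₀ < 1/4}
  have hcover : Vᶜ ⊆ ⋃ i : ι, {t | 3/4 < i.1 t} := fun t ht => by
    obtain ⟨φ, hφ, hne⟩ := hsep x₀ t (ne_of_mem_of_not_mem hx₀ ht)
    obtain ⟨ψ, hψ, hx₀ψ, htψ⟩ := Conv.exists_lt_and_one_sub_lt_of_ne hφ hne (ε := 1/4)
      (by norm_num)
    exact mem_iUnion.2 ⟨⟨ψ, hψ, hx₀ψ⟩, show 3/4 < ψ t by linarith⟩
  obtain ⟨s, hs⟩ := hV.isClosed_compl.isCompact.elim_finite_subcover _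
    (fun i => isOpen_lt continuous_const i.1.continuous) hcover
  refine ⟨V ∩ ⋂ i ∈ s, {t | i.1 t < 1/4},
    hV.inter (isOpen_biInter_finset fun i _ => isOpen_lt i.1.continuous continuous_const),
    ⟨hx₀, mem_iInter₂.2 fun i _ => i.2.2⟩, inter_subset_left, fun δ hδ _ => ?_⟩
  obtain ⟨φ, hφ, hU, hVc⟩ := Conv.exists_prod_amplify s (fun i => i.2.1)
    (a := 1/4) (b := 3/4) (by norm_num) (by norm_num) (by norm_num) hδ
  refine ⟨φ, hφ, fun t ht => hU t fun i hi => (mem_iInter₂.1 ht.2 i hi).le,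
    fun t ht => hVc t ?_⟩
  obtain ⟨i, hi, hit⟩ := mem_iUnion₂.1 (hs ht)
  exact ⟨i, hi, hit.le⟩

theorem conv_selection_lemma {K : Type*} [TopologicalSpace K] [CompactSpace K] [T2Space K]
    (H : Set C(K, KC))
    (hsep : ∀ s t : K, s ≠ t → ∃ φ ∈ Conv H, φ s ≠ φ t)
    (x₀ : K) (V : Set K) (hV : IsOpen V) (hx₀ : x₀ ∈ V) :
    ∃ U : Set K, IsOpen U ∧ x₀ ∈ U ∧ U ⊆ V ∧
      ∀ δ : ℝ, 0 < δ → δ < 1/2 →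
        ∃ φ ∈ Conv H, (∀ t ∈ U, 1 - δ < φ t) ∧ (∀ t ∉ V, φ t < δ) :=
  conv_selection_lemma_general H hsep x₀ V hV hx₀
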